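/- arXiv:1612.02483 — 5 statements merged into one kernel-verified Lean document; each statement's English description precedes it below -/
import Mathlib

section
/- Let θ be a linear order on ℤ satisfying both θ = θ+2 (i.e., a ≺_θ b iff a+2 ≺_θ b+2) and the reflection condition a ≺_θ b iff -b-1 ≺_θ -a-1. Then either both the odd and the even integers appear monotonically increasing in θ (a ≺_θ b for all a<b of equal parity), or both appear monotonically decreasing (b ≺_θ a for all a<b of equal parity). -/
open Function

section ShiftInvariant

variable {r : ℤ → ℤ → Prop} {d : ℤ}

theorem rel_add_mul_iff (hshift : ∀ a b, r a b ↔ r (a + d) (b + d)) (k a b : ℤ) :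
    r (a + k * d) (b + k * d) ↔ r a b := by
  induction k using Int.induction_on with
  | zero => simp
  | succ k ih => rw [← ih, hshift (a + k * d)]; ring_nf
  | pred k ih => rw [← ih, hshift (a + (-k - 1) * d)]; ring_nf

theorem rel_iff_of_sub_eq_of_dvd (hshift : ∀ a b, r a b ↔ r (a + d) (b + d)) {a b a' b' : ℤ}
    (hsub : a' - a = b' - b) (hdvd : d ∣ a' - a) : r a b ↔ r a' b' := by
  obtain ⟨k, hk⟩ := hdvd
  obtain rfl : a' = a + k * d := by linarith
  obtain rfl : b' = b + k * d := by linarith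
  exact (rel_add_mul_iff hshift k a b).symm

theorem rel_of_lt_of_modEq [IsTrans ℤ r] (hd : 0 < d) (hstep : ∀ a, r a (a + d)) {a b : ℤ}
    (hab : a < b) (hmod : a ≡ b [ZMOD d]) : r a b := by
  obtain ⟨k, hk⟩ := hmod.dvd
  have hk0 : 0 < k := (pos_iff_pos_of_mul_pos (hk ▸ sub_pos.2 hab)).1 hd
  have := Int.rel_of_forall_rel_succ_of_lt r (f := fun n => a + n * d)
    (fun n => by simpa only [add_mul, one_mul, add_assoc] using hstep (a + n * d)) hk0
  convert this using 2 <;> linarith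

end ShiftInvariant

section Reflection

variable {r : ℤ → ℤ → Prop}

theorem rel_add_two_iff_of_even (hshift : ∀ a b, r a b ↔ r (a + 2) (b + 2)) {a : ℤ}
    (ha : Even a) : r a (a + 2) ↔ r 0 2 :=
  (rel_iff_of_sub_eq_of_dvd hshift (by ring) (by simpa using ha.two_dvd)).symm

/-- Even steps are translates of the step `0 → 2`, and the reflection `x ↦ -x - 1`
turns each odd step `a → a + 2` into the even step `-a - 3 → -a - 1`. -/
theorem rel_add_two_iff (hshift : ∀ a b, r a b ↔ r (a + 2) (b + 2))
    (hrefl : ∀ a b, r a b ↔ r (-b - 1) (-a - 1)) (a : ℤ) : r a (a + 2) ↔ r 0 2 := by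
  rcases Int.even_or_odd a with ha | ⟨k, rfl⟩
  · exact rel_add_two_iff_of_even hshift ha
  · rw [hrefl, show -(2 * k + 1 + 2) - 1 = -2 * k - 4 by ring,
      show -(2 * k + 1) - 1 = -2 * k - 4 + 2 by ring]
    exact rel_add_two_iff_of_even hshift ⟨-k - 2, by ring⟩

end Reflection

theorem stmt_2 (r : ℤ → ℤ → Prop) (h : IsStrictTotalOrder ℤ r)
    (hshift : ∀ a b : ℤ, r a b ↔ r (a + 2) (b + 2))
    (hrefl : ∀ a b : ℤ, r a b ↔ r (-b - 1) (-a - 1)) :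
    (∀ a b : ℤ, a < b → a % 2 = b % 2 → r a b) ∨
    (∀ a b : ℤ, a < b → a % 2 = b % 2 → r b a) := by
  have := h
  rcases trichotomous_of r 0 2 with h02 | h02 | h20
  · refine Or.inl fun a b hab hmod => rel_of_lt_of_modEq two_pos (fun a => ?_) hab hmod
    exact (rel_add_two_iff hshift hrefl a).2 h02
  · norm_num at h02
  · refine Or.inr fun a b hab hmod => rel_of_lt_of_modEq (r := swap r) two_pos (fun a => ?_) hab hmod
    exact (rel_add_two_iff (r := swap r) (fun a b => hshift b a) (fun a b => hrefl b a) a).2 h20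
end

section
/- Let θ be a linear order on ℤ with θ = θ+2 and satisfying the reflection condition (a ≺_θ b iff -b-1 ≺_θ -a-1). Suppose there exist two integers a < b of the same parity that are consecutive in θ (no integer c satisfies a ≺_θ c ≺_θ b or b ≺_θ c ≺_θ a), and suppose 1 ≺_θ 2. Then for all integers q, q', we have 2q+1 ≺_θ 2q'. -/
/-!
Reflecting a consecutive odd pair gives a consecutive even pair, and translating it gives a
consecutive pair `0, 2d` with `d > 0`. Invariance under `+2` makes the even integers a monotone
chain for `θ`, so `2` would lie between `0` and `2d` unless `d = 1`. Hence every pair `2m, 2m + 2`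
is consecutive, so the odd integer `1` lies on the same side of all even integers; as `1 ≺ 2`,
it precedes all of them, and translating by `2q` finishes the proof.
-/

def IsConsecutive {α : Type*} (r : α → α → Prop) (a b : α) : Prop :=
  ∀ c : α, ¬(r a c ∧ r c b) ∧ ¬(r b c ∧ r c a)

namespace IsConsecutive

variable {α : Type*} {r : α → α → Prop} {a b : α}

theorem symm (h : IsConsecutive r a b) : IsConsecutive r b a :=
  fun c => (h c).symm

theorem rel_left_iff [IsStrictTotalOrder α r] (h : IsConsecutive r a b) {x : α} (ha : x ≠ a)
    (hb : x ≠ b) : r x a ↔ r x b := by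
  constructor
  · intro hxa
    rcases trichotomous_of r x b with hxb | rfl | hbx
    · exact hxb
    · exact absurd rfl hb
    · exact absurd ⟨hbx, hxa⟩ (h x).2
  · intro hxb
    rcases trichotomous_of r x a with hxa | rfl | hax
    · exact hxa
    · exact absurd rfl ha
    · exact absurd ⟨hax, hxb⟩ (h x).1

end IsConsecutive

theorem rel_iff_of_isConsecutive_succ {α : Type*} {r : α → α → Prop} [IsStrictTotalOrder α r]
    {f : ℤ → α} (hf : ∀ m, IsConsecutive r (f m) (f (m + 1))) {x : α} (hx : ∀ m, x ≠ f m)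
    (m n : ℤ) : r x (f m) ↔ r x (f n) := by
  suffices key : ∀ m, r x (f m) ↔ r x (f 0) by rw [key m, key n]
  intro m
  induction m using Int.induction_on with
  | zero => rfl
  | succ k ih => rw [← ih, (hf k).rel_left_iff (hx _) (hx _)]
  | pred k ih =>
    have hstep := hf (-k - 1)
    rw [sub_add_cancel] at hstep
    rw [← ih, hstep.rel_left_iff (hx _) (hx _)]

section

variable {r : ℤ → ℤ → Prop}

theorem rel_add_two_mul_iff (hshift : ∀ a b : ℤ, r a b ↔ r (a + 2) (b + 2)) (k x y : ℤ) :
    r (x + 2 * k) (y + 2 * k) ↔ r x y := by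
  induction k using Int.induction_on with
  | zero => simp
  | succ n ih => rw [← ih, hshift (x + 2 * n)]; ring_nf
  | pred n ih => rw [← ih, hshift (x + 2 * (-n - 1))]; ring_nf

theorem rel_two_mul_of_lt [IsTrans ℤ r] (hshift : ∀ a b : ℤ, r a b ↔ r (a + 2) (b + 2))
    (h02 : r 0 2) {i j : ℤ} (hij : i < j) : r (2 * i) (2 * j) :=
  Int.rel_of_forall_rel_succ_of_lt r (f := (2 * ·))
    (fun k => by simpa [mul_add, add_comm] using (rel_add_two_mul_iff hshift k 0 2).2 h02) hij

namespace IsConsecutive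

variable {a b : ℤ}

theorem add_two_mul (hshift : ∀ a b : ℤ, r a b ↔ r (a + 2) (b + 2)) (h : IsConsecutive r a b)
    (k : ℤ) : IsConsecutive r (a + 2 * k) (b + 2 * k) := by
  intro c
  obtain ⟨c, rfl⟩ : ∃ c', c = c' + 2 * k := ⟨c - 2 * k, by ring⟩
  simpa only [rel_add_two_mul_iff hshift] using h c

theorem neg_sub_one (hrefl : ∀ a b : ℤ, r a b ↔ r (-b - 1) (-a - 1)) (h : IsConsecutive r a b) :
    IsConsecutive r (-a - 1) (-b - 1) := by
  intro c
  obtain ⟨c, rfl⟩ : ∃ c', c = -c' - 1 := ⟨-c - 1, by ring⟩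
  simp only [← hrefl]
  exact ⟨fun ⟨hca, hbc⟩ => (h c).2 ⟨hbc, hca⟩, fun ⟨hcb, hac⟩ => (h c).1 ⟨hac, hcb⟩⟩

theorem exists_zero_two_mul (hshift : ∀ a b : ℤ, r a b ↔ r (a + 2) (b + 2))
    (hrefl : ∀ a b : ℤ, r a b ↔ r (-b - 1) (-a - 1)) (hab : a < b) (hpar : a % 2 = b % 2)
    (h : IsConsecutive r a b) : ∃ d, 0 < d ∧ IsConsecutive r 0 (2 * d) := by
  suffices even_case : ∀ a b : ℤ, a % 2 = 0 → a < b → b % 2 = 0 → IsConsecutive r a b →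
      ∃ d, 0 < d ∧ IsConsecutive r 0 (2 * d) by
    rcases Int.emod_two_eq a with ha | ha
    · exact even_case a b ha hab (by omega) h
    · exact even_case (-b - 1) (-a - 1) (by omega) (by omega) (by omega) (h.neg_sub_one hrefl).symm
  intro a b ha hab hb h
  refine ⟨(b - a) / 2, by omega, ?_⟩
  convert h.add_two_mul hshift (-(a / 2)) using 1 <;> omega

theorem eq_one [IsStrictTotalOrder ℤ r] (hshift : ∀ a b : ℤ, r a b ↔ r (a + 2) (b + 2))
    {d : ℤ} (h : IsConsecutive r 0 (2 * d)) (hd : 0 < d) : d = 1 := by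
  by_contra hne
  have hd : 1 < d := by omega
  rcases trichotomous_of r 0 2 with h02 | h02 | h20
  · exact (h 2).1 ⟨h02, by simpa using rel_two_mul_of_lt hshift h02 hd⟩
  · omega
  · have h2d : r (2 * d) (2 * 1) :=
      rel_two_mul_of_lt (r := Function.swap r) (fun a b => hshift b a) h20 hd
    exact (h 2).2 ⟨by simpa using h2d, h20⟩

end IsConsecutive

end

theorem stmt_3 (r : ℤ → ℤ → Prop) (h : IsStrictTotalOrder ℤ r)
    (hshift : ∀ a b : ℤ, r a b ↔ r (a + 2) (b + 2))
    (hrefl : ∀ a b : ℤ, r a b ↔ r (-b - 1) (-a - 1))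
    (a b : ℤ) (hab : a < b) (hpar : a % 2 = b % 2)
    (hcons : ∀ c : ℤ, ¬(r a c ∧ r c b) ∧ ¬(r b c ∧ r c a))
    (h12 : r 1 2) :
    ∀ q q' : ℤ, r (2 * q + 1) (2 * q') := by
  obtain ⟨d, hd, h0d⟩ := IsConsecutive.exists_zero_two_mul hshift hrefl hab hpar hcons
  obtain rfl := h0d.eq_one hshift hd
  have hstep (m : ℤ) : IsConsecutive r (2 * m) (2 * (m + 1)) := by
    simpa [mul_add, add_comm] using h0d.add_two_mul hshift m
  have h1 (m : ℤ) : r 1 (2 * m) :=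
    (rel_iff_of_isConsecutive_succ hstep (fun _ => by omega) m 1).2 (by simpa using h12)
  intro q q'
  simpa [mul_sub, add_comm] using (rel_add_two_mul_iff hshift q 1 (2 * (q' - q))).2 (h1 (q' - q))
end

section
/- There are exactly four linear orders θ on ℤ satisfying θ = θ+2, the reflection condition (a ≺_θ b iff -b-1 ≺_θ -a-1), and such that some two integers of the same parity are consecutive in θ. They are: (i) all odd numbers in increasing order followed by all even numbers in increasing order; (ii) all odds decreasing followed by all evens decreasing; (iii) all evens increasing followed by all odds increasing; (iv) all evens decreasing followed by all odds decreasing. (Here 'X followed by Y' means every element of X is θ-smaller than every element of Y.) -/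
/-- odds increasing, then evens increasing -/
def tauOE (a b : ℤ) : Prop :=
  (a % 2 = 1 ∧ b % 2 = 1 ∧ a < b) ∨ (a % 2 = 0 ∧ b % 2 = 0 ∧ a < b) ∨
  (a % 2 = 1 ∧ b % 2 = 0)

/-- odds decreasing, then evens decreasing -/
def tauOEm (a b : ℤ) : Prop :=
  (a % 2 = 1 ∧ b % 2 = 1 ∧ b < a) ∨ (a % 2 = 0 ∧ b % 2 = 0 ∧ b < a) ∨
  (a % 2 = 1 ∧ b % 2 = 0)

/-- evens increasing, then odds increasing -/
def tauEO (a b : ℤ) : Prop :=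
  (a % 2 = 0 ∧ b % 2 = 0 ∧ a < b) ∨ (a % 2 = 1 ∧ b % 2 = 1 ∧ a < b) ∨
  (a % 2 = 0 ∧ b % 2 = 1)

/-- evens decreasing, then odds decreasing -/
def tauEOm (a b : ℤ) : Prop :=
  (a % 2 = 0 ∧ b % 2 = 0 ∧ b < a) ∨ (a % 2 = 1 ∧ b % 2 = 1 ∧ b < a) ∨
  (a % 2 = 0 ∧ b % 2 = 1)

/-- `a` and `b` are distinct and consecutive in the order `r`:
no integer lies strictly `r`-between them. -/
def Consecutive (r : ℤ → ℤ → Prop) (a b : ℤ) : Prop :=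
  a ≠ b ∧ ∀ c : ℤ, ¬(r a c ∧ r c b) ∧ ¬(r b c ∧ r c a)

/-!
Reflection maps a step `x ↦ x + 2` inside one parity class to a step inside the other, so
together with 2-periodicity the truth of `r x (x + 2)` does not depend on `x`: up to reversing
the order, both parity classes are ordered increasingly. A consecutive same-parity pair is then
some `a, a + 2`, and since no element of the other class lies between them, periodicity forces
that whole class below or above the class of `a`. This determines the order.
-/

def IsAdmissibleOrder (r : ℤ → ℤ → Prop) : Prop :=
  IsStrictTotalOrder ℤ r ∧ (∀ a b : ℤ, r a b ↔ r (a + 2) (b + 2)) ∧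
    (∀ a b : ℤ, r a b ↔ r (-b - 1) (-a - 1)) ∧ ∃ a b : ℤ, a % 2 = b % 2 ∧ Consecutive r a b

section Relations

variable {α : Type*} {r s : α → α → Prop} {a b : α}

theorem rel_of_not_rel_of_ne [Std.Trichotomous r] (hne : a ≠ b) (h : ¬r b a) : r a b := by
  by_contra h'
  exact hne (Std.Trichotomous.trichotomous a b h' h)

theorem eq_of_forall_rel_imp [Std.Trichotomous s] [Std.Asymm r] (h : ∀ a b, s a b → r a b) :
    r = s := by
  funext a b
  refine propext ⟨fun hab => ?_, h a b⟩
  by_contra hs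
  by_cases hba : s b a
  · exact asymm hab (h b a hba)
  · obtain rfl := Std.Trichotomous.trichotomous a b hs hba
    exact asymm hab hab

theorem ne_of_rel_of_not_rel (hr : r a b) (hs : ¬s a b) : r ≠ s := by
  rintro rfl
  exact hs hr

end Relations

section ShiftInvariant

variable {r : ℤ → ℤ → Prop}

theorem rel_iff_of_sub_eq (hS : ∀ a b : ℤ, r a b ↔ r (a + 2) (b + 2)) {a b a' b' : ℤ}
    (h : a' - a = b' - b) (h2 : 2 ∣ a' - a) : r a' b' ↔ r a b := by
  obtain ⟨k, hk⟩ := h2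
  have hper : Function.Periodic (fun t => r (a + t) (b + t)) 2 := fun t =>
    propext <| by simpa only [add_assoc] using (hS (a + t) (b + t)).symm
  have hk' := hper.int_mul_eq k
  simp only [add_zero, Int.cast_id] at hk'
  rw [show a' = a + k * 2 by omega, show b' = b + k * 2 by omega, hk']

theorem rel_add_two_iff_rel_zero_two (hS : ∀ a b : ℤ, r a b ↔ r (a + 2) (b + 2))
    (hR : ∀ a b : ℤ, r a b ↔ r (-b - 1) (-a - 1)) (x : ℤ) :
    r x (x + 2) ↔ r 0 2 := by
  have hper : Function.Periodic (fun t => r t (t + 2)) 1 := fun t =>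
    propext <| (hR _ _).trans <|
      rel_iff_of_sub_eq hS (a := t) (b := t + 2) (by ring) ⟨-t - 2, by ring⟩
  simpa using (hper.int_mul_eq x).to_iff

theorem rel_of_lt_of_emod_two_eq [IsTrans ℤ r] (hstep : ∀ x, r x (x + 2)) {x y : ℤ}
    (hlt : x < y) (hpar : x % 2 = y % 2) : r x y := by
  obtain ⟨k, hk, rfl⟩ : ∃ k, 1 ≤ k ∧ y = x + 2 * k := ⟨(y - x) / 2, by omega, by omega⟩
  clear hlt hpar
  induction k, hk using Int.leInduction with
  | base => exact hstep x
  | succ k _ ih =>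
    simpa only [mul_add, mul_one, ← add_assoc] using _root_.trans ih (hstep (x + 2 * k))

end ShiftInvariant

section Consecutive

variable {r : ℤ → ℤ → Prop}

theorem Consecutive.symm {a b : ℤ} (h : Consecutive r a b) : Consecutive r b a :=
  ⟨h.1.symm, fun c => (h.2 c).symm⟩

theorem Consecutive.swap {a b : ℤ} (h : Consecutive r a b) :
    Consecutive (Function.swap r) a b :=
  ⟨h.1, fun c => ⟨fun h' => (h.2 c).2 h'.symm, fun h' => (h.2 c).1 h'.symm⟩⟩

theorem exists_consecutive_add_two (hmono : ∀ x y, x < y → x % 2 = y % 2 → r x y)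
    (hC : ∃ a b : ℤ, a % 2 = b % 2 ∧ Consecutive r a b) : ∃ a, Consecutive r a (a + 2) := by
  have eq_add_two {a b : ℤ} (hpar : a % 2 = b % 2) (hab : a < b) (h : Consecutive r a b) :
      b = a + 2 := by
    by_contra hne
    exact (h.2 (a + 2)).1 ⟨hmono _ _ (by omega) (by omega), hmono _ _ (by omega) (by omega)⟩
  obtain ⟨a, b, hpar, h⟩ := hC
  rcases lt_or_gt_of_ne h.1 with hab | hba
  · exact ⟨a, eq_add_two hpar hab h ▸ h⟩
  · exact ⟨b, eq_add_two hpar.symm hba h.symm ▸ h.symm⟩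

variable [IsStrictTotalOrder ℤ r] {a : ℤ}

theorem rel_add_two_iff_of_consecutive (hS : ∀ a b : ℤ, r a b ↔ r (a + 2) (b + 2))
    (hstep : ∀ x, r x (x + 2)) (ha : Consecutive r a (a + 2)) {c : ℤ} (hc : c % 2 ≠ a % 2) :
    r (c + 2) a ↔ r c a := by
  have hshift : r (c + 2) (a + 2) ↔ r c a := rel_iff_of_sub_eq hS (by ring) ⟨1, by ring⟩
  refine ⟨fun h => hshift.1 (_root_.trans h (hstep a)), fun hca => ?_⟩
  by_contra hne
  have h1 : r a (c + 2) := rel_of_not_rel_of_ne (by omega) hne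
  have h2 : r (a + 2) (c + 2) := rel_of_not_rel_of_ne (by omega) fun h => (ha.2 _).1 ⟨h1, h⟩
  exact asymm hca ((rel_iff_of_sub_eq hS (by ring) ⟨1, by ring⟩).1 h2)

theorem exists_forall_rel_of_consecutive (hS : ∀ a b : ℤ, r a b ↔ r (a + 2) (b + 2))
    (hstep : ∀ x, r x (x + 2)) (ha : Consecutive r a (a + 2)) :
    ∃ p : ℤ, ∀ x y, x % 2 = p % 2 → y % 2 ≠ p % 2 → r x y := by
  have hper : Function.Periodic (fun t => r (a + 1 + t * 2) a) 1 := fun t => propext <| by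
    simpa only [add_mul, one_mul, add_assoc] using
      rel_add_two_iff_of_consecutive hS hstep ha (c := a + 1 + t * 2) (by omega)
  have hside (t : ℤ) : r (a + 1 + t * 2) a ↔ r (a + 1) a := by
    simpa using (hper.int_mul_eq t).to_iff
  by_cases h1 : r (a + 1) a
  · refine ⟨a + 1, fun x y hx hy => ?_⟩
    have := (hside ((x - y - 1) / 2)).2 h1
    exact (rel_iff_of_sub_eq hS (by omega) (by omega)).2 this
  · refine ⟨a, fun x y hx hy => ?_⟩
    have : r a (a + 1 + (y - x - 1) / 2 * 2) :=
      rel_of_not_rel_of_ne (by omega) fun h => h1 ((hside _).1 h)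
    exact (rel_iff_of_sub_eq hS (by omega) (by omega)).2 this

end Consecutive

instance : IsStrictTotalOrder ℤ tauOE where
  trichotomous := by unfold tauOE; omega
  irrefl := by unfold tauOE; omega
  trans := by unfold tauOE; omega

instance : IsStrictTotalOrder ℤ tauEO where
  trichotomous := by unfold tauEO; omega
  irrefl := by unfold tauEO; omega
  trans := by unfold tauEO; omega

theorem swap_tauOE : Function.swap tauOE = tauEOm := by
  funext a b
  unfold Function.swap tauOE tauEOm
  apply propext
  omega

theorem swap_tauEO : Function.swap tauEO = tauOEm := by
  funext a b
  unfold Function.swap tauEO tauOEm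
  apply propext
  omega

theorem IsAdmissibleOrder.swap {r : ℤ → ℤ → Prop} (h : IsAdmissibleOrder r) :
    IsAdmissibleOrder (Function.swap r) := by
  obtain ⟨hr, hS, hR, a, b, hab, hC⟩ := h
  exact ⟨inferInstance, fun x y => hS y x, fun x y => hR y x, a, b, hab, hC.swap⟩

theorem isAdmissibleOrder_tauOE : IsAdmissibleOrder tauOE :=
  ⟨inferInstance, by unfold tauOE; omega, by unfold tauOE; omega, 1, 3, rfl,
    by norm_num, fun _ => by unfold tauOE; omega⟩

theorem isAdmissibleOrder_tauEO : IsAdmissibleOrder tauEO :=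
  ⟨inferInstance, by unfold tauEO; omega, by unfold tauEO; omega, 0, 2, rfl,
    by norm_num, fun _ => by unfold tauEO; omega⟩

theorem eq_tauEO_or_eq_tauOE_of_forall_rel {r : ℤ → ℤ → Prop} [Std.Asymm r]
    (hmono : ∀ x y, x < y → x % 2 = y % 2 → r x y) (p : ℤ)
    (hcross : ∀ x y, x % 2 = p % 2 → y % 2 ≠ p % 2 → r x y) : r = tauEO ∨ r = tauOE := by
  rcases Int.emod_two_eq p with hp | hp <;> [left; right] <;> refine eq_of_forall_rel_imp ?_ <;>
    rintro x y (⟨hx, hy, hxy⟩ | ⟨hx, hy, hxy⟩ | ⟨hx, hy⟩)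
  all_goals first
    | exact hmono x y hxy (by omega)
    | exact hcross x y (by omega) (by omega)

theorem IsAdmissibleOrder.eq_tauEO_or_eq_tauOE {r : ℤ → ℤ → Prop} (h : IsAdmissibleOrder r)
    (h02 : r 0 2) : r = tauEO ∨ r = tauOE := by
  obtain ⟨hr, hS, hR, hC⟩ := h
  have hstep (x : ℤ) : r x (x + 2) := (rel_add_two_iff_rel_zero_two hS hR x).2 h02
  have hmono (x y : ℤ) : x < y → x % 2 = y % 2 → r x y := rel_of_lt_of_emod_two_eq hstep
  obtain ⟨a, ha⟩ := exists_consecutive_add_two hmono hC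
  obtain ⟨p, hp⟩ := exists_forall_rel_of_consecutive hS hstep ha
  exact eq_tauEO_or_eq_tauOE_of_forall_rel hmono p hp

theorem isAdmissibleOrder_iff {r : ℤ → ℤ → Prop} :
    IsAdmissibleOrder r ↔ r = tauOE ∨ r = tauOEm ∨ r = tauEO ∨ r = tauEOm := by
  constructor
  · intro h
    have := h.1
    rcases trichotomous_of r 0 2 with h02 | h02 | h20
    · rcases h.eq_tauEO_or_eq_tauOE h02 with rfl | rfl <;> simp
    · omega
    · rcases h.swap.eq_tauEO_or_eq_tauOE h20 with h' | h'
      · simp [← swap_tauEO, ← h']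
      · simp [← swap_tauOE, ← h']
  · rintro (rfl | rfl | rfl | rfl)
    · exact isAdmissibleOrder_tauOE
    · exact swap_tauEO ▸ isAdmissibleOrder_tauEO.swap
    · exact isAdmissibleOrder_tauEO
    · exact swap_tauOE ▸ isAdmissibleOrder_tauOE.swap

theorem pairwise_ne_tau :
    ([tauOE, tauOEm, tauEO, tauEOm] : List (ℤ → ℤ → Prop)).Pairwise (· ≠ ·) := by
  obtain ⟨oe13, oem13, eo13, eom13⟩ : tauOE 1 3 ∧ ¬tauOEm 1 3 ∧ tauEO 1 3 ∧ ¬tauEOm 1 3 := by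
    norm_num [tauOE, tauOEm, tauEO, tauEOm]
  obtain ⟨oe10, oem10, eo10, eom10⟩ : tauOE 1 0 ∧ tauOEm 1 0 ∧ ¬tauEO 1 0 ∧ ¬tauEOm 1 0 := by
    norm_num [tauOE, tauOEm, tauEO, tauEOm]
  simp only [List.pairwise_cons, List.mem_cons, List.not_mem_nil, List.Pairwise.nil,
    forall_eq_or_imp, IsEmpty.forall_iff, implies_true, and_true]
  exact ⟨⟨ne_of_rel_of_not_rel oe13 oem13, ne_of_rel_of_not_rel oe10 eo10,
      ne_of_rel_of_not_rel oe13 eom13⟩,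
    ⟨ne_of_rel_of_not_rel oem10 eo10, ne_of_rel_of_not_rel oem10 eom10⟩,
    ne_of_rel_of_not_rel eo13 eom13⟩

theorem stmt_4 :
    {r : ℤ → ℤ → Prop | IsStrictTotalOrder ℤ r ∧
      (∀ a b : ℤ, r a b ↔ r (a + 2) (b + 2)) ∧
      (∀ a b : ℤ, r a b ↔ r (-b - 1) (-a - 1)) ∧
      ∃ a b : ℤ, a % 2 = b % 2 ∧ Consecutive r a b}
      = {tauOE, tauOEm, tauEO, tauEOm} ∧
    ([tauOE, tauOEm, tauEO, tauEOm] : List (ℤ → ℤ → Prop)).Pairwise (· ≠ ·) := by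
  exact ⟨Set.ext fun r => isAdmissibleOrder_iff, pairwise_ne_tau⟩
end

section
/- Let θ be a linear order on ℤ in which both odd and even numbers appear monotonically increasing (a ≺_θ b whenever a < b have the same parity). Then for any n ≥ 1, among the integers in [0, 6n-1], the 2n θ-smallest elements of that interval are all strictly less than 4n (in the usual order on ℤ). -/
open scoped Classical

theorem stmt_8 (r : ℤ → ℤ → Prop) (h : IsStrictTotalOrder ℤ r)
    (hmono : ∀ a b : ℤ, a < b → a % 2 = b % 2 → r a b)
    (n : ℕ) (hn : 1 ≤ n) (x : ℤ) (hx : x ∈ Finset.Icc (0 : ℤ) (6 * n - 1))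
    (hrank : ((Finset.Icc (0 : ℤ) (6 * n - 1)).filter (fun y => r y x)).card ≤ 2 * n - 1) :
    x < 4 * n := by
  by_contra hge
  push_neg at hge
  rw [Finset.mem_Icc] at hx
  set S : Finset ℤ := (Finset.range (2 * n)).image (fun k : ℕ => x - 2 * ((k : ℤ) + 1)) with hS
  have hsub : S ⊆ (Finset.Icc (0 : ℤ) (6 * n - 1)).filter (fun y => r y x) := by
    intro y hy
    simp only [hS, Finset.mem_image, Finset.mem_range] at hy
    obtain ⟨k, hk, rfl⟩ := hy
    have hk' : (k : ℤ) < 2 * n := by exact_mod_cast hk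
    refine Finset.mem_filter.mpr ⟨Finset.mem_Icc.mpr ⟨by linarith, by linarith⟩, ?_⟩
    exact hmono _ _ (by linarith) (by omega)
  have hcard : S.card = 2 * n := by
    rw [hS, Finset.card_image_of_injective _ (fun a b hab => by
      omega), Finset.card_range]
  have := Finset.card_le_card hsub
  rw [hcard] at this
  omega
end

section
/- Translation Lemma: For p, q ∈ ℤ^d with q coordinatewise ≥ p, and a linear order θ on ℤ, the total-order-construction path from p to q using θ equals the translate by p of the total-order-construction path from the origin to q - p using the shifted order θ - (Σ_i p_i). That is, if p = m_1,…,m_k = q is the path from p using θ and o = w_1,…,w_k = q-p is the path from the origin using θ - Σp_i, then m_j = w_j + p for all j. -/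
open scoped Classical

/-- One step of the total order construction in `ℤ^d` for the positive orthant:
at the point `m`, increment the first coordinate (in the axis-order `x_1, …, x_d`)
whose cumulative threshold exceeds the rank of `∑ m i` in the restriction of `r`
to the interval `[∑ p i, ∑ q i - 1]`. -/
noncomputable def stepD {d : ℕ} (r : ℤ → ℤ → Prop) (p q m : Fin d → ℤ) : Fin d → ℤ :=
  let rank := ((Finset.Icc (∑ i, p i) ((∑ i, q i) - 1)).filter
    (fun y => r y (∑ i, m i))).card
  match (List.finRange d).find?
      (fun j => decide (rank < (∑ i ∈ Finset.univ.filter (· ≤ j), (q i - p i)).toNat)) with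
  | some j => Function.update m j (m j + 1)
  | none => m

/-- The point visited after `j` steps of the total order construction path from `p`
towards `q` generated by the order `r`. -/
noncomputable def pathD {d : ℕ} (r : ℤ → ℤ → Prop) (p q : Fin d → ℤ) : ℕ → Fin d → ℤ
  | 0 => p
  | j + 1 => stepD r p q (pathD r p q j)

lemma step_shift {d : ℕ} (r : ℤ → ℤ → Prop) (p q w : Fin d → ℤ) :
    stepD r p q (fun i => w i + p i) =
      fun i => stepD (fun a b => r (a + ∑ i, p i) (b + ∑ i, p i))
        0 (fun i => q i - p i) w i + p i := by
  have hsum : (∑ i : Fin d, (w i + p i)) = (∑ i : Fin d, w i) + ∑ i, p i := by rw [Finset.sum_add_distrib]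
  have hrank : ((Finset.Icc (∑ i, p i) ((∑ i, q i) - 1)).filter
      (fun y => r y ((∑ i : Fin d, w i) + ∑ i, p i))).card =
      ((Finset.Icc (∑ _i : Fin d, (0:ℤ)) ((∑ i, (q i - p i)) - 1)).filter
      (fun y => r (y + ∑ i, p i) ((∑ i, w i) + ∑ i, p i))).card := by
    apply Finset.card_bij (fun y _ => y - ∑ i, p i)
    · intro a ha
      simp only [Finset.mem_filter, Finset.mem_Icc, Finset.sum_sub_distrib,
        Finset.sum_const_zero] at *
      constructor
      · omega
      · simpa using ha.2
    · intro a ha b hb hab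
      omega
    · intro b hb
      refine ⟨b + ∑ i, p i, ?_, by ring⟩
      simp only [Finset.mem_filter, Finset.mem_Icc, Finset.sum_sub_distrib,
        Finset.sum_const_zero] at *
      exact ⟨by omega, hb.2⟩
  simp only [stepD, hsum, Pi.zero_apply, sub_zero]
  rw [hrank]
  cases hcase : (List.finRange d).find? (fun j => decide
      (((Finset.Icc (∑ _i : Fin d, (0:ℤ)) ((∑ i, (q i - p i)) - 1)).filter
        (fun y => r (y + ∑ i, p i) ((∑ i, w i) + ∑ i, p i))).card <
        (∑ i ∈ Finset.univ.filter (· ≤ j), (q i - p i)).toNat)) with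
  | none => rfl
  | some j =>
    funext i
    simp only [Function.update]
    split <;> simp_all <;> ring

theorem stmt_10 {d : ℕ} (r : ℤ → ℤ → Prop) (h : IsStrictTotalOrder ℤ r)
    (p q : Fin d → ℤ) (hpq : ∀ i, p i ≤ q i) (j : ℕ)
    (hj : j ≤ (∑ i, (q i - p i)).toNat) :
    pathD r p q j =
      fun i => pathD (fun a b => r (a + ∑ i, p i) (b + ∑ i, p i))
        0 (fun i => q i - p i) j i + p i := by
  induction j with
  | zero => funext i; simp [pathD]
  | succ j ih =>
    have ih' := ih (by omega)
    show stepD r p q (pathD r p q j) = _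
    rw [ih', step_shift]
    rfl
end
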